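/- (Rademacher complexity of dictionary classifiers under a multinomial distribution) In the setting of the dictionary-classifier Rademacher bound, if inputs are drawn i.i.d. so that the probability of landing in cell Kⱼ is pⱼ, then the expected empirical Rademacher complexity satisfies E_S R(F±, S) ≤ (∑ⱼ √pⱼ)/(2√N) = √(2^{H_{1/2}(p)}/(4N)), where H_{1/2}(p) = 2 log₂(∑ⱼ √pⱼ) is the Rényi-1/2 entropy. -/

import Mathlib

/-!
A dictionary classifier picks its sign on each cell independently, so for fixed Rademacher
signs `σ` the supremum over the class is at most `(1/(2N)) (∑ₙ σₙ + ∑ⱼ |∑_{n ∈ K_j} σₙ yₙ|)`.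
Averaging over `σ`, the first term vanishes and, by Cauchy–Schwarz and orthogonality of the
signs, the `j`-th term contributes at most `√N_j`. Averaging over the multinomial sample,
concavity of `√` gives `E √N_j ≤ √(E N_j) = √(N p_j)`; the Rényi form is
`2^{H_{1/2}(p)} = (∑ⱼ √pⱼ)²`.
-/

open Finset

/-- `±1` value of a `Bool`. -/
def radR (b : Bool) : ℝ := if b then 1 else -1

/-- Empirical Rademacher complexity of the 0-1 loss for the class of `±1`-valued
dictionary classifiers (functions constant on each of `K` cells), for a sample whose
`n`-th point lies in cell `x n` and carries label `y n`. -/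
noncomputable def empRad {K N : ℕ} (x : Fin N → Fin K) (y : Fin N → Bool) : ℝ :=
  ((2 : ℝ) ^ N)⁻¹ * ∑ σ : Fin N → Bool,
    (univ : Finset (Fin K → Bool)).sup' Finset.univ_nonempty
      (fun g => (1 / N : ℝ) *
        ∑ n, radR (σ n) * ((1 - radR (y n) * radR (g (x n))) / 2))

lemma radR_not (b : Bool) : radR (!b) = -radR b := by cases b <;> simp [radR]

lemma radR_mul_self (b : Bool) : radR b * radR b = 1 := by cases b <;> norm_num [radR]

lemma abs_radR (b : Bool) : |radR b| = 1 := by cases b <;> norm_num [radR]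

section SignVectors

variable {ι : Type*} [Fintype ι] [DecidableEq ι]

lemma sum_eq_zero_of_flip_eq_neg (i : ι) {f : (ι → Bool) → ℝ}
    (hf : ∀ σ, f (Function.update σ i (!σ i)) = -f σ) : ∑ σ, f σ = 0 := by
  have hflip : Function.Involutive fun σ : ι → Bool => Function.update σ i (!σ i) := fun σ => by
    ext j
    rcases eq_or_ne j i with rfl | hj <;> simp [*]
  have h := Equiv.sum_comp (hflip.toPerm _) f
  simp only [Function.Involutive.coe_toPerm, hf, sum_neg_distrib] at h
  linarith

lemma sum_radR_apply (i : ι) : ∑ σ : ι → Bool, radR (σ i) = 0 :=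
  sum_eq_zero_of_flip_eq_neg i fun σ => by simp [radR_not]

lemma sum_radR_mul_radR (i j : ι) :
    ∑ σ : ι → Bool, radR (σ i) * radR (σ j) = if i = j then 2 ^ Fintype.card ι else 0 := by
  split_ifs with hij
  · subst hij
    simp [radR_mul_self]
  · refine sum_eq_zero_of_flip_eq_neg i fun σ => ?_
    simp [Function.update_of_ne (Ne.symm hij), radR_not]

lemma sum_sq_sum_radR_mul (s : Finset ι) (c : ι → ℝ) :
    ∑ σ : ι → Bool, (∑ i ∈ s, radR (σ i) * c i) ^ 2 = 2 ^ Fintype.card ι * ∑ i ∈ s, c i ^ 2 := by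
  calc ∑ σ : ι → Bool, (∑ i ∈ s, radR (σ i) * c i) ^ 2
      = ∑ i ∈ s, ∑ j ∈ s, c i * c j * ∑ σ : ι → Bool, radR (σ i) * radR (σ j) := by
        simp_rw [sq, sum_mul_sum, mul_sum]
        rw [sum_comm]
        refine sum_congr rfl fun i _ => ?_
        rw [sum_comm]
        exact sum_congr rfl fun j _ => sum_congr rfl fun σ _ => by ring
    _ = 2 ^ Fintype.card ι * ∑ i ∈ s, c i ^ 2 := by
        simp_rw [sum_radR_mul_radR, mul_ite, mul_zero, sum_ite_eq, mul_sum]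
        exact sum_congr rfl fun i hi => by simp [hi]; ring

lemma sum_abs_sum_radR_mul_le (s : Finset ι) (c : ι → ℝ) :
    ∑ σ : ι → Bool, |∑ i ∈ s, radR (σ i) * c i|
      ≤ 2 ^ Fintype.card ι * √(∑ i ∈ s, c i ^ 2) := by
  refine le_of_pow_le_pow_left₀ two_ne_zero (by positivity) ?_
  calc (∑ σ : ι → Bool, |∑ i ∈ s, radR (σ i) * c i|) ^ 2
      ≤ 2 ^ Fintype.card ι * ∑ σ : ι → Bool, |∑ i ∈ s, radR (σ i) * c i| ^ 2 := by
        simpa [Fintype.card_fun] using sq_sum_le_card_mul_sum_sq (s := univ)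
          (f := fun σ : ι → Bool => |∑ i ∈ s, radR (σ i) * c i|)
    _ = (2 ^ Fintype.card ι * √(∑ i ∈ s, c i ^ 2)) ^ 2 := by
        rw [mul_pow, Real.sq_sqrt (by positivity)]
        simp_rw [sq_abs, sum_sq_sum_radR_mul]
        ring

end SignVectors

def cell {ι κ : Type*} [Fintype ι] [DecidableEq κ] (x : ι → κ) (j : κ) : Finset ι := {n | x n = j}

lemma sum_radR_mul_loss_le {ι κ : Type*} [Fintype ι] [Fintype κ] [DecidableEq κ]
    (x : ι → κ) (y σ : ι → Bool) (g : κ → Bool) :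
    ∑ n, radR (σ n) * ((1 - radR (y n) * radR (g (x n))) / 2)
      ≤ (∑ n, radR (σ n) + ∑ j, |∑ n ∈ cell x j, radR (σ n) * radR (y n)|) / 2 := by
  have hfiber : ∑ n, radR (σ n) * radR (y n) * radR (g (x n))
      = ∑ j, radR (g j) * ∑ n ∈ cell x j, radR (σ n) * radR (y n) := by
    rw [← sum_fiberwise univ x]
    refine sum_congr rfl fun j _ => ?_
    rw [mul_sum]
    refine sum_congr rfl fun n hn => ?_
    rw [(mem_filter.mp hn).2]
    ring
  have hcorr : -∑ j, |∑ n ∈ cell x j, radR (σ n) * radR (y n)|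
      ≤ ∑ j, radR (g j) * ∑ n ∈ cell x j, radR (σ n) * radR (y n) := by
    rw [← sum_neg_distrib]
    refine sum_le_sum fun j _ => ?_
    simpa [abs_mul, abs_radR] using
      neg_abs_le (radR (g j) * ∑ n ∈ cell x j, radR (σ n) * radR (y n))
  have hsplit : ∑ n, radR (σ n) * ((1 - radR (y n) * radR (g (x n))) / 2)
      = (∑ n, radR (σ n) - ∑ n, radR (σ n) * radR (y n) * radR (g (x n))) / 2 := by
    rw [← sum_sub_distrib, sum_div]
    exact sum_congr rfl fun n _ => by ring
  rw [hsplit, hfiber]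
  linarith

lemma empRad_le_sum_sqrt_card_cell {K N : ℕ} (x : Fin N → Fin K) (y : Fin N → Bool) :
    empRad x y ≤ (2 * N : ℝ)⁻¹ * ∑ j, √(#(cell x j)) := by
  set S : Fin K → (Fin N → Bool) → ℝ := fun j σ => ∑ n ∈ cell x j, radR (σ n) * radR (y n)
  calc empRad x y
      ≤ ((2 : ℝ) ^ N)⁻¹ * ∑ σ : Fin N → Bool,
          (1 / N : ℝ) * ((∑ n, radR (σ n) + ∑ j, |S j σ|) / 2) := by
        unfold empRad
        gcongr with σ
        exact sup'_le _ _ fun g _ => by gcongr; exact sum_radR_mul_loss_le x y σ g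
    _ = ((2 : ℝ) ^ N)⁻¹ * (2 * N : ℝ)⁻¹ * ∑ j, ∑ σ : Fin N → Bool, |S j σ| := by
        simp_rw [← mul_sum, ← sum_div, sum_add_distrib]
        have hmean : ∑ σ : Fin N → Bool, ∑ n, radR (σ n) = 0 := by
          rw [sum_comm]
          exact sum_eq_zero fun n _ => sum_radR_apply n
        rw [hmean, zero_add, sum_comm]
        ring
    _ ≤ ((2 : ℝ) ^ N)⁻¹ * (2 * N : ℝ)⁻¹ * ∑ j, 2 ^ N * √(#(cell x j)) := by
        gcongr with j
        simpa [sq, radR_mul_self] using sum_abs_sum_radR_mul_le (cell x j) (fun n => radR (y n))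
    _ = (2 * N : ℝ)⁻¹ * ∑ j, √(#(cell x j)) := by
        rw [← mul_sum]
        field_simp

section ProductWeights

variable {ι κ R : Type*} [Fintype ι] [DecidableEq ι] [Fintype κ] [CommSemiring R]
  {p : κ → R}

lemma sum_prod_apply_eq_one (hp1 : ∑ k, p k = 1) : ∑ x : ι → κ, ∏ n, p (x n) = 1 := by
  rw [← Fintype.prod_sum]
  simp [hp1]

lemma sum_prod_mul_apply (hp1 : ∑ k, p k = 1) (n : ι) (f : κ → R) :
    ∑ x : ι → κ, (∏ m, p (x m)) * f (x n) = ∑ k, p k * f k := by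
  set q : ι → κ → R := fun m k => p k * if m = n then f k else 1
  have hq : ∀ x : ι → κ, (∏ m, p (x m)) * f (x n) = ∏ m, q m (x m) := fun x => by
    rw [prod_mul_distrib, prod_ite_eq', if_pos (mem_univ n)]
  simp_rw [hq, ← Fintype.prod_sum, q, mul_ite, mul_one, sum_ite_irrel, hp1, prod_ite_eq']
  simp

lemma sum_prod_mul_card_cell [DecidableEq κ] (hp1 : ∑ k, p k = 1) (j : κ) :
    ∑ x : ι → κ, (∏ m, p (x m)) * (#(cell x j) : R) = Fintype.card ι * p j := by
  simp_rw [cell, ← sum_boole, mul_sum]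
  rw [sum_comm]
  refine (sum_congr rfl fun n _ =>
    sum_prod_mul_apply hp1 n fun k => if k = j then 1 else 0).trans ?_
  simp

end ProductWeights

lemma sum_mul_sqrt_le_sqrt_sum_mul {ι : Type*} (s : Finset ι) {w a : ι → ℝ}
    (hw : ∀ i ∈ s, 0 ≤ w i) (hw1 : ∑ i ∈ s, w i = 1) (ha : ∀ i ∈ s, 0 ≤ a i) :
    ∑ i ∈ s, w i * √(a i) ≤ √(∑ i ∈ s, w i * a i) :=
  Real.strictConcaveOn_sqrt.concaveOn.le_map_sum hw hw1 ha

lemma sum_prod_mul_sqrt_card_cell_le {ι κ : Type*} [Fintype ι] [DecidableEq ι] [Fintype κ]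
    [DecidableEq κ] {p : κ → ℝ} (hp : ∀ k, 0 ≤ p k) (hp1 : ∑ k, p k = 1) (j : κ) :
    ∑ x : ι → κ, (∏ m, p (x m)) * √(#(cell x j)) ≤ √(Fintype.card ι * p j) := by
  rw [← sum_prod_mul_card_cell hp1 j]
  exact sum_mul_sqrt_le_sqrt_sum_mul univ (fun x _ => prod_nonneg fun m _ => hp (x m))
    (sum_prod_apply_eq_one hp1) fun x _ => Nat.cast_nonneg _

lemma two_rpow_two_mul_logb {s : ℝ} (hs : 0 < s) : (2 : ℝ) ^ (2 * Real.logb 2 s) = s ^ 2 := by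
  rw [mul_comm, Real.rpow_mul zero_le_two, Real.rpow_logb zero_lt_two (by norm_num) hs,
    Real.rpow_two]

lemma sum_sqrt_pos_of_sum_eq_one {ι : Type*} {s : Finset ι} {p : ι → ℝ}
    (hp : ∀ i, 0 ≤ p i) (hp1 : ∑ i ∈ s, p i = 1) : 0 < ∑ i ∈ s, √(p i) := by
  obtain ⟨i, hi, hpi⟩ := exists_ne_zero_of_sum_ne_zero (hp1.symm ▸ one_ne_zero)
  exact sum_pos' (fun j _ => Real.sqrt_nonneg _) ⟨i, hi, Real.sqrt_pos.mpr ((hp i).lt_of_ne' hpi)⟩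

theorem rademacher_dictionary_multinomial_general {K N : ℕ}
    (p : Fin K → ℝ) (hp : ∀ j, 0 ≤ p j) (hp1 : ∑ j, p j = 1)
    (y : Fin N → Bool) :
    (∑ x : Fin N → Fin K, (∏ n, p (x n)) * empRad x y)
        ≤ (∑ j, Real.sqrt (p j)) / (2 * Real.sqrt N) ∧
    (∑ j, Real.sqrt (p j)) / (2 * Real.sqrt N)
        = Real.sqrt ((2 : ℝ) ^ (2 * Real.logb 2 (∑ j, Real.sqrt (p j))) / (4 * N)) := by
  refine ⟨?_, ?_⟩
  · calc ∑ x : Fin N → Fin K, (∏ n, p (x n)) * empRad x y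
        ≤ ∑ x : Fin N → Fin K, (∏ n, p (x n)) * ((2 * N : ℝ)⁻¹ * ∑ j, √(#(cell x j))) :=
          sum_le_sum fun x _ => mul_le_mul_of_nonneg_left (empRad_le_sum_sqrt_card_cell x y)
            (prod_nonneg fun n _ => hp (x n))
      _ = (2 * N : ℝ)⁻¹ * ∑ j, ∑ x : Fin N → Fin K, (∏ n, p (x n)) * √(#(cell x j)) := by
          simp_rw [mul_sum, mul_left_comm _ (2 * N : ℝ)⁻¹]
          exact sum_comm
      _ ≤ (2 * N : ℝ)⁻¹ * ∑ j, √(N * p j) := by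
          gcongr with j
          simpa using sum_prod_mul_sqrt_card_cell_le (ι := Fin N) hp hp1 j
      _ = (∑ j, √(p j)) / (2 * √N) := by
          have hN : (N : ℝ)⁻¹ * √N = (√N)⁻¹ := by
            rw [← div_eq_inv_mul, Real.sqrt_div_self', one_div]
          simp_rw [Real.sqrt_mul (Nat.cast_nonneg N), ← mul_sum]
          linear_combination (∑ j, √(p j)) / 2 * hN
  · have hs := sum_sqrt_pos_of_sum_eq_one hp hp1
    rw [two_rpow_two_mul_logb hs, Real.sqrt_div (sq_nonneg _), Real.sqrt_sq hs.le,
      Real.sqrt_mul zero_le_four, show (4 : ℝ) = 2 ^ 2 by norm_num, Real.sqrt_sq zero_le_two]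

/-- Rademacher complexity of dictionary classifiers under i.i.d. cell assignments with
probabilities `pⱼ`: `E_S R(F±, S) ≤ (∑ⱼ √pⱼ)/(2√N) = √(2^{H_{1/2}(p)}/(4N))`, where
`H_{1/2}(p) = 2 log₂ ∑ⱼ √pⱼ`. -/
theorem rademacher_dictionary_multinomial {K N : ℕ} (hN : 0 < N) (hK : 0 < K)
    (p : Fin K → ℝ) (hp : ∀ j, 0 ≤ p j) (hp1 : ∑ j, p j = 1)
    (y : Fin N → Bool) :
    (∑ x : Fin N → Fin K, (∏ n, p (x n)) * empRad x y)
        ≤ (∑ j, Real.sqrt (p j)) / (2 * Real.sqrt N) ∧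
    (∑ j, Real.sqrt (p j)) / (2 * Real.sqrt N)
        = Real.sqrt ((2 : ℝ) ^ (2 * Real.logb 2 (∑ j, Real.sqrt (p j))) / (4 * N)) :=
  rademacher_dictionary_multinomial_general p hp hp1 y
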